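/- arXiv:1505.07961 — 4 statements merged into one kernel-verified Lean document; each statement's English description precedes it below -/
import Mathlib

section
/- Let X and Y be real Banach spaces, let ι : Y → X be a continuous injective linear map, and suppose that the induced map from the continuous dual X' to Y' given by φ ↦ φ ∘ ι has dense range in Y'. Let T > 0 and let f : [0,T] → Y be a function such that sup_{t ∈ [0,T]} ‖f(t)‖_Y ≤ C for some constant C, and such that t ↦ ι(f(t)) is continuous from [0,T] into X. Then f is weakly continuous with values in Y, i.e. for every ψ ∈ Y' the function t ↦ ψ(f(t)) is continuous on [0,T]. -/
open Set

/-- Abstract form of `L^∞(0,T;Y) ∩ C([0,T];X) ↪ C_w([0,T];Y)`: if `ι : Y → X` is a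
continuous injective linear map between Banach spaces whose adjoint `φ ↦ φ ∘ ι` has
dense range in `Y'`, and `f : [0,T] → Y` is bounded with `ι ∘ f` continuous, then
`f` is weakly continuous with values in `Y`. -/
theorem stmt_1 {X Y : Type*}
    [NormedAddCommGroup X] [NormedSpace ℝ X] [CompleteSpace X]
    [NormedAddCommGroup Y] [NormedSpace ℝ Y] [CompleteSpace Y]
    (ι : Y →L[ℝ] X) (hinj : Function.Injective ι)
    (hdense : DenseRange (fun φ : X →L[ℝ] ℝ => φ.comp ι))
    (T : ℝ) (hT : 0 < T) (f : ℝ → Y) (C : ℝ)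
    (hbound : ∀ t ∈ Icc (0 : ℝ) T, ‖f t‖ ≤ C)
    (hcont : ContinuousOn (fun t => ι (f t)) (Icc (0 : ℝ) T)) :
    ∀ ψ : Y →L[ℝ] ℝ, ContinuousOn (fun t => ψ (f t)) (Icc (0 : ℝ) T) := by
  intro ψ t ht
  have hC : 0 ≤ C := le_trans (norm_nonneg _) (hbound 0 ⟨le_refl 0, hT.le⟩)
  rw [Metric.continuousWithinAt_iff]
  intro ε hε
  have hε3 : 0 < ε / (3 * (C + 1)) := by positivity
  obtain ⟨φ, hφ⟩ := Metric.denseRange_iff.mp hdense ψ _ hε3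
  have key : ∀ s ∈ Icc (0:ℝ) T, |ψ (f s) - φ (ι (f s))| ≤ ε / 3 := by
    intro s hs
    have he : |ψ (f s) - φ (ι (f s))| = |(ψ - φ.comp ι) (f s)| := by simp
    rw [he]
    calc |(ψ - φ.comp ι) (f s)| ≤ ‖ψ - φ.comp ι‖ * ‖f s‖ := (ψ - φ.comp ι).le_opNorm _
      _ ≤ (ε / (3 * (C + 1))) * (C + 1) := by
          apply mul_le_mul _ _ (norm_nonneg _) hε3.le
          · rw [← dist_eq_norm]; exact hφ.le
          · linarith [hbound s hs]
      _ = ε / 3 := by field_simp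
  have hcont' := (φ.continuous.comp_continuousOn hcont) t ht
  rw [Metric.continuousWithinAt_iff] at hcont'
  obtain ⟨δ, hδ, hδ'⟩ := hcont' (ε / 3) (by positivity)
  refine ⟨δ, hδ, fun s hs hds => ?_⟩
  have h3 := hδ' hs hds
  have h1 := key s hs
  have h2 := key t ht
  rw [Real.dist_eq] at h3 ⊢; simp only [Function.comp] at h3
  have habs : |ψ (f s) - ψ (f t)| ≤
      |ψ (f s) - φ (ι (f s))| + |φ (ι (f s)) - φ (ι (f t))| + |φ (ι (f t)) - ψ (f t)| := by
    calc |ψ (f s) - ψ (f t)| ≤ |ψ (f s) - φ (ι (f t))| + |φ (ι (f t)) - ψ (f t)| :=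
          abs_sub_le _ _ _
      _ ≤ |ψ (f s) - φ (ι (f s))| + |φ (ι (f s)) - φ (ι (f t))| + |φ (ι (f t)) - ψ (f t)| := by
          linarith [abs_sub_le (ψ (f s)) (φ (ι (f s))) (φ (ι (f t)))]
  have h2' : |φ (ι (f t)) - ψ (f t)| ≤ ε / 3 := by rw [abs_sub_comm]; exact h2
  linarith
end

section
/- Let 0 < T < ∞, let E : [0,T) → ℝ be lower semicontinuous and integrable on (0,T), and let D : (0,T) → ℝ be integrable. Assume that for every absolutely continuous function ω : [0,T] → ℝ (that is, there exists an integrable function ω' on (0,T) with ω(t) = ω(0) + ∫₀ᵗ ω'(τ) dτ for all t ∈ [0,T]) satisfying ω(T) = 0 and ω(t) ≥ 0 for all t ∈ [0,T], one has E(0)·ω(0) + ∫₀ᵀ E(τ)·ω'(τ) dτ ≥ ∫₀ᵀ D(τ)·ω(τ) dτ. Then there is a set S ⊆ [0,T) of full Lebesgue measure in [0,T) containing 0 such that for every s ∈ S and every t ∈ [s,T) one has E(t) + ∫ₛᵗ D(τ) dτ ≤ E(s). -/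
open MeasureTheory Set Filter Topology Metric
lemma aux_ell_nonneg {a b τ : ℝ} (hab : a ≤ b) : 0 ≤ min τ b - min τ a :=
  sub_nonneg.2 (min_le_min le_rfl hab)

lemma aux_ell_le {a b τ : ℝ} (hab : a ≤ b) : min τ b - min τ a ≤ b - a := by
  rcases le_total τ a with h | h
  · rw [min_eq_left h, min_eq_left (h.trans hab)]; linarith
  · rw [min_eq_right h]
    have : min τ b ≤ b := min_le_right _ _
    linarith

lemma aux_ind_int (a b : ℝ) :
    Integrable ((Ioc a b).indicator (fun _ => (1:ℝ))) volume := by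
  rw [integrable_indicator_iff measurableSet_Ioc]
  exact integrableOn_const measure_Ioc_lt_top.ne

lemma aux_integral_indicator {a b : ℝ} (ha : 0 ≤ a) (hab : a ≤ b) (τ : ℝ) (hτ : 0 ≤ τ) :
    ∫ x in (0:ℝ)..τ, (Ioc a b).indicator (fun _ => (1:ℝ)) x = min τ b - min τ a := by
  rw [intervalIntegral.integral_of_le hτ, integral_indicator measurableSet_Ioc,
      Measure.restrict_restrict measurableSet_Ioc, Ioc_inter_Ioc, setIntegral_const,
      smul_eq_mul, mul_one, measureReal_def, Real.volume_Ioc, max_eq_left ha]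
  rcases le_total τ a with h | h
  · rw [min_eq_left h, min_eq_left (h.trans hab), min_eq_right (h.trans hab)]
    rw [show ENNReal.ofReal (τ - a) = 0 from ENNReal.ofReal_eq_zero.2 (by linarith)]
    simp
  · rw [min_eq_right h, min_comm b τ]
    rw [ENNReal.toReal_ofReal (by rcases le_total τ b with h' | h' <;>
      simp [min_eq_left, min_eq_right, h'] <;> linarith)]

lemma aux_integral_mul_indicator {T : ℝ} (E : ℝ → ℝ) (hEint : IntegrableOn E (Ioo 0 T))
    {a b : ℝ} (hsub : Ioc a b ⊆ Ioo 0 T) :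
    ∫ τ in Ioo (0:ℝ) T, E τ * (Ioc a b).indicator (fun _ => (1:ℝ)) τ = ∫ τ in Ioc a b, E τ := by
  have h1 : ∀ τ, E τ * (Ioc a b).indicator (fun _ => (1:ℝ)) τ = (Ioc a b).indicator E τ := by
    intro τ; by_cases h : τ ∈ Ioc a b <;> simp [h]
  simp only [h1]
  rw [integral_indicator measurableSet_Ioc, Measure.restrict_restrict measurableSet_Ioc,
    inter_eq_left.2 hsub]

lemma aux_integrableOn_mul_indicator {T : ℝ} (E : ℝ → ℝ) (hEint : IntegrableOn E (Ioo 0 T))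
    {a b : ℝ} (hsub : Ioc a b ⊆ Ioo 0 T) :
    IntegrableOn (fun τ => E τ * (Ioc a b).indicator (fun _ => (1:ℝ)) τ) (Ioo 0 T) := by
  have h1 : ∀ τ, E τ * (Ioc a b).indicator (fun _ => (1:ℝ)) τ = (Ioc a b).indicator E τ := by
    intro τ; by_cases h : τ ∈ Ioc a b <;> simp [h]
  simp only [h1]
  exact ((hEint.mono_set hsub).integrable_indicator measurableSet_Ioc).integrableOn

lemma aux_domconv {T : ℝ} (D : ℝ → ℝ) (hDint : IntegrableOn D (Ioo 0 T))
    (s t : ℝ) (hs : 0 ≤ s) (hst : s < t) (htT : t < T)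
    (φ : ℝ → ℝ → ℝ)
    (hmeas : ∀ᶠ ε in 𝓝[>] (0:ℝ),
      AEStronglyMeasurable (fun τ => D τ * φ ε τ) (volume.restrict (Ioo 0 T)))
    (hbd : ∀ᶠ ε in 𝓝[>] (0:ℝ), ∀ τ ∈ Ioo (0:ℝ) T, |φ ε τ| ≤ 1)
    (hlim : ∀ τ ∈ Ioo (0:ℝ) T, τ ≠ s → τ ≠ t →
      Tendsto (fun ε => φ ε τ) (𝓝[>] (0:ℝ)) (𝓝 ((Ioc s t).indicator (fun _ => (1:ℝ)) τ))) :
    Tendsto (fun ε => ∫ τ in Ioo (0:ℝ) T, D τ * φ ε τ) (𝓝[>] (0:ℝ))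
      (𝓝 (∫ τ in s..t, D τ)) := by
  have hIoc : Ioc s t ⊆ Ioo 0 T := fun x hx => ⟨lt_of_le_of_lt hs hx.1, lt_of_le_of_lt hx.2 htT⟩
  have htarget : (∫ τ in s..t, D τ) =
      ∫ τ in Ioo (0:ℝ) T, D τ * (Ioc s t).indicator (fun _ => (1:ℝ)) τ := by
    rw [aux_integral_mul_indicator D hDint hIoc, intervalIntegral.integral_of_le hst.le]
  rw [htarget]
  apply tendsto_integral_filter_of_dominated_convergence (fun τ => |D τ|) hmeas
  · filter_upwards [hbd] with ε hε
    filter_upwards [self_mem_ae_restrict measurableSet_Ioo] with τ hτ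
    rw [Real.norm_eq_abs, abs_mul]
    calc |D τ| * |φ ε τ| ≤ |D τ| * 1 := by
          exact mul_le_mul_of_nonneg_left (hε τ hτ) (abs_nonneg _)
      _ = |D τ| := mul_one _
  · exact hDint.abs
  · have hst' : volume ({s, t} : Set ℝ) = 0 := by
      exact Set.Countable.measure_zero (Set.Countable.insert s (Set.countable_singleton t)) volume
    have h2 : ∀ᵐ τ ∂(volume.restrict (Ioo (0:ℝ) T)), τ ∉ ({s, t} : Set ℝ) :=
      ae_restrict_of_ae (measure_eq_zero_iff_ae_notMem.1 hst')
    filter_upwards [self_mem_ae_restrict measurableSet_Ioo, h2] with τ hτ hτ'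
    simp only [mem_insert_iff, mem_singleton_iff, not_or] at hτ'
    exact (hlim τ hτ hτ'.1 hτ'.2).const_mul (D τ)

lemma aux_key {T : ℝ} (E D : ℝ → ℝ)
    (hElsc : LowerSemicontinuousOn E (Ico 0 T))
    (hEint : IntegrableOn E (Ioo 0 T))
    {s t : ℝ} (hs : 0 ≤ s) (hst : s < t) (htT : t < T)
    (A I : ℝ → ℝ)
    (hA : Tendsto A (𝓝[>] (0:ℝ)) (𝓝 (E s)))
    (hI : Tendsto I (𝓝[>] (0:ℝ)) (𝓝 (∫ τ in s..t, D τ)))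
    (hineq : ∀ᶠ ε in 𝓝[>] (0:ℝ),
      (2*ε)⁻¹ * ∫ x in Ioc (t-ε) (t+ε), E x ≤ A ε - I ε) :
    E t + ∫ τ in s..t, D τ ≤ E s := by
  by_contra hcon
  push_neg at hcon
  set J := ∫ τ in s..t, D τ
  set c := (E s - J + E t) / 2 with hc
  have hc1 : c < E t := by simp only [hc]; linarith
  have hc2 : E s - J < c := by simp only [hc]; linarith
  have ht_mem : t ∈ Ico (0:ℝ) T := ⟨hs.trans hst.le, htT⟩
  have hlsc := hElsc t ht_mem c hc1
  rw [eventually_iff, Metric.mem_nhdsWithin_iff] at hlsc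
  obtain ⟨δ, hδ0, hδ⟩ := hlsc
  -- eventually, the average over Ioc (t-ε) (t+ε) is at least c
  have hev1 : ∀ᶠ ε in 𝓝[>] (0:ℝ), c ≤ (2*ε)⁻¹ * ∫ x in Ioc (t-ε) (t+ε), E x := by
    have hpos : (0:ℝ) < min δ (min t (T - t)) := by
      apply lt_min hδ0; apply lt_min (hs.trans_lt hst); linarith
    filter_upwards [Ioo_mem_nhdsGT_of_mem ⟨le_rfl, hpos⟩] with ε ⟨hε0, hεδ⟩
    have hεδ' : ε < δ := lt_of_lt_of_le hεδ (min_le_left _ _)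
    have hεt : ε < t := lt_of_lt_of_le hεδ ((min_le_right _ _).trans (min_le_left _ _))
    have hεT : ε < T - t := lt_of_lt_of_le hεδ ((min_le_right _ _).trans (min_le_right _ _))
    have hsub : Ioc (t-ε) (t+ε) ⊆ Ico 0 T := by
      intro τ hτ; exact ⟨by rcases hτ with ⟨h1, h2⟩; linarith, by rcases hτ with ⟨h1, h2⟩; linarith⟩
    have hEc : ∀ τ ∈ Ioc (t-ε) (t+ε), c ≤ E τ := by
      intro τ hτ
      refine le_of_lt (hδ ⟨?_, hsub hτ⟩)
      rw [Metric.mem_ball, Real.dist_eq, abs_lt]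
      rcases hτ with ⟨h1, h2⟩; constructor <;> linarith
    have hint : ∫ x in Ioc (t-ε) (t+ε), E x ≥ c * (2*ε) := by
      have h1 : ∫ x in Ioc (t-ε) (t+ε), (c:ℝ) ≤ ∫ x in Ioc (t-ε) (t+ε), E x := by
        apply setIntegral_mono_on (integrableOn_const measure_Ioc_lt_top.ne)
          (hEint.mono_set (fun τ hτ => ?_)) measurableSet_Ioc hEc
        · rcases hτ with ⟨h1, h2⟩
          exact ⟨by linarith, by linarith⟩
      rw [setIntegral_const, measureReal_def, Real.volume_Ioc, smul_eq_mul,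
        ENNReal.toReal_ofReal (by linarith)] at h1
      calc c * (2*ε) = (t + ε - (t - ε)) * c := by ring
        _ ≤ _ := h1
    have h2ε : (0:ℝ) < 2*ε := by linarith
    calc c = (2*ε)⁻¹ * (c * (2*ε)) := by field_simp
      _ ≤ (2*ε)⁻¹ * ∫ x in Ioc (t-ε) (t+ε), E x := by
          apply mul_le_mul_of_nonneg_left hint (by positivity)
  have hev2 : ∀ᶠ ε in 𝓝[>] (0:ℝ), A ε - I ε < c := by
    have : Tendsto (fun ε => A ε - I ε) (𝓝[>] (0:ℝ)) (𝓝 (E s - J)) := hA.sub hI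
    exact this.eventually_lt_const hc2
  have : ∀ᶠ ε in 𝓝[>] (0:ℝ), False := by
    filter_upwards [hev1, hev2, hineq] with ε h1 h2 h3
    linarith
  exact this.exists.elim (fun _ h => h)

lemma aux_lebesgue (f : ℝ → ℝ) (hf : LocallyIntegrable f volume) :
    ∀ᵐ x, Tendsto (fun ε : ℝ => (2*ε)⁻¹ * ∫ y in Ioc (x-ε) (x+ε), f y)
      (𝓝[>] (0:ℝ)) (𝓝 (f x)) := by
  filter_upwards [IsUnifLocDoublingMeasure.ae_tendsto_average (μ := (volume : Measure ℝ)) hf 1]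
    with x hx
  have hx' := hx (fun _ => x) id tendsto_id
    (by filter_upwards [self_mem_nhdsWithin] with ε (hε : (0:ℝ) < ε)
        exact mem_closedBall_self (by simp; linarith))
  apply hx'.congr'
  filter_upwards [self_mem_nhdsWithin] with ε (hε : (0:ℝ) < ε)
  show ⨍ y in closedBall x ε, f y = (2*ε)⁻¹ * ∫ y in Ioc (x-ε) (x+ε), f y
  rw [setAverage_eq, Real.closedBall_eq_Icc, measureReal_def, Real.volume_Icc, integral_Icc_eq_integral_Ioc,
    ENNReal.toReal_ofReal (by linarith), smul_eq_mul]
  norm_num [show x + ε - (x - ε) = 2*ε by ring]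

lemma aux_case_pos {T : ℝ} (hT : 0 < T) (E D : ℝ → ℝ)
    (hElsc : LowerSemicontinuousOn E (Ico 0 T))
    (hEint : IntegrableOn E (Ioo 0 T))
    (hDint : IntegrableOn D (Ioo 0 T))
    (hweak : ∀ ω ω' : ℝ → ℝ, IntegrableOn ω' (Ioo 0 T) →
      (∀ t ∈ Icc (0 : ℝ) T, ω t = ω 0 + ∫ τ in (0 : ℝ)..t, ω' τ) →
      ω T = 0 → (∀ t ∈ Icc (0 : ℝ) T, 0 ≤ ω t) →
      E 0 * ω 0 + ∫ τ in Ioo (0 : ℝ) T, E τ * ω' τ ≥ ∫ τ in Ioo (0 : ℝ) T, D τ * ω τ)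
    {s t : ℝ} (hs : 0 < s) (hst : s < t) (htT : t < T)
    (hA : Tendsto (fun ε => (2*ε)⁻¹ * ∫ x in Ioc (s-ε) (s+ε), E x)
      (𝓝[>] (0:ℝ)) (𝓝 (E s))) :
    E t + ∫ τ in s..t, D τ ≤ E s := by
  set φ : ℝ → ℝ → ℝ := fun ε τ =>
    (2*ε)⁻¹ * ((min τ (s+ε) - min τ (s-ε)) - (min τ (t+ε) - min τ (t-ε))) with hφ
  have hδpos : (0:ℝ) < min s (min ((t-s)/2) (T-t)) := by
    apply lt_min hs; apply lt_min (by linarith) (by linarith)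
  have hδs : min s (min ((t-s)/2) (T-t)) ≤ s := min_le_left _ _
  have hδst : min s (min ((t-s)/2) (T-t)) ≤ (t-s)/2 := (min_le_right _ _).trans (min_le_left _ _)
  have hδT : min s (min ((t-s)/2) (T-t)) ≤ T-t := (min_le_right _ _).trans (min_le_right _ _)
  set δ := min s (min ((t-s)/2) (T-t))
  -- bounds on φ, valid for all real τ once ε is small
  have hφ01 : ∀ ε, 0 < ε → ε < δ → ∀ τ : ℝ, 0 ≤ φ ε τ ∧ φ ε τ ≤ 1 := by
    intro ε hε0 hεδ τ
    have hεs : ε < s := lt_of_lt_of_le hεδ hδs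
    have hεst : s + ε ≤ t - ε := by
      have := lt_of_lt_of_le hεδ hδst; linarith
    have h2ε : (0:ℝ) < 2*ε := by linarith
    have hℓs0 : 0 ≤ min τ (s+ε) - min τ (s-ε) := aux_ell_nonneg (by linarith)
    have hℓsle : min τ (s+ε) - min τ (s-ε) ≤ 2*ε := by
      have := aux_ell_le (a := s-ε) (b := s+ε) (τ := τ) (by linarith); linarith
    have hℓt0 : 0 ≤ min τ (t+ε) - min τ (t-ε) := aux_ell_nonneg (by linarith)
    have hℓtle : min τ (t+ε) - min τ (t-ε) ≤ 2*ε := by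
      have := aux_ell_le (a := t-ε) (b := t+ε) (τ := τ) (by linarith); linarith
    constructor
    · apply mul_nonneg (by positivity)
      rcases le_total τ (t-ε) with h | h
      · have h1 : min τ (t-ε) = τ := min_eq_left h
        have h2 : min τ (t+ε) = τ := min_eq_left (by linarith)
        rw [h1, h2]; linarith
      · have h1 : min τ (s-ε) = s-ε := min_eq_right (by linarith)
        have h2 : min τ (s+ε) = s+ε := min_eq_right (by linarith)
        rw [h1, h2]; linarith
    · have hb : (min τ (s+ε) - min τ (s-ε)) - (min τ (t+ε) - min τ (t-ε)) ≤ 2*ε := by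
        linarith
      calc φ ε τ ≤ (2*ε)⁻¹ * (2*ε) := mul_le_mul_of_nonneg_left hb (by positivity)
        _ = 1 := by field_simp
  -- the inequality coming from the weak formulation
  have hineq : ∀ᶠ ε in 𝓝[>] (0:ℝ),
      (2*ε)⁻¹ * ∫ x in Ioc (t-ε) (t+ε), E x ≤
        ((2*ε)⁻¹ * ∫ x in Ioc (s-ε) (s+ε), E x) -
          ∫ τ in Ioo (0:ℝ) T, D τ * φ ε τ := by
    filter_upwards [Ioo_mem_nhdsGT_of_mem ⟨le_rfl, hδpos⟩] with ε hε
    obtain ⟨hε0, hεδ⟩ := hε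
    have hεs : ε < s := lt_of_lt_of_le hεδ hδs
    have hεst : s + ε ≤ t - ε := by have := lt_of_lt_of_le hεδ hδst; linarith
    have hεT : t + ε < T := by have := lt_of_lt_of_le hεδ hδT; linarith
    have h2ε : (0:ℝ) < 2*ε := by linarith
    have hsub1 : Ioc (s-ε) (s+ε) ⊆ Ioo 0 T := by
      intro τ hτ; obtain ⟨h1, h2⟩ := hτ
      constructor <;> linarith
    have hsub2 : Ioc (t-ε) (t+ε) ⊆ Ioo 0 T := by
      intro τ hτ; obtain ⟨h1, h2⟩ := hτ
      constructor <;> linarith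
    set ω' : ℝ → ℝ := fun τ => (2*ε)⁻¹ *
      ((Ioc (s-ε) (s+ε)).indicator (fun _ => (1:ℝ)) τ -
       (Ioc (t-ε) (t+ε)).indicator (fun _ => (1:ℝ)) τ) with hω'
    have hω'int : IntegrableOn ω' (Ioo 0 T) :=
      (((aux_ind_int (s-ε) (s+ε)).sub (aux_ind_int (t-ε) (t+ε))).const_mul _).integrableOn
    have hFTC : ∀ τ ∈ Icc (0:ℝ) T, φ ε τ = φ ε 0 + ∫ x in (0:ℝ)..τ, ω' x := by
      intro τ hτ
      have h0 : φ ε 0 = 0 := by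
        simp only [hφ]
        rw [min_eq_left (by linarith : (0:ℝ) ≤ s+ε), min_eq_left (by linarith : (0:ℝ) ≤ s-ε),
          min_eq_left (by linarith : (0:ℝ) ≤ t+ε), min_eq_left (by linarith : (0:ℝ) ≤ t-ε)]
        ring
      rw [h0, zero_add, hω']
      rw [intervalIntegral.integral_const_mul,
        intervalIntegral.integral_sub (aux_ind_int _ _).intervalIntegrable
          (aux_ind_int _ _).intervalIntegrable,
        aux_integral_indicator (by linarith) (by linarith) τ hτ.1,
        aux_integral_indicator (by linarith) (by linarith) τ hτ.1]
    have hφT : φ ε T = 0 := by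
      simp only [hφ]
      rw [min_eq_right (by linarith : s+ε ≤ T), min_eq_right (by linarith : s-ε ≤ T),
        min_eq_right (by linarith : t+ε ≤ T), min_eq_right (by linarith : t-ε ≤ T)]
      ring
    have hφnn : ∀ τ ∈ Icc (0:ℝ) T, 0 ≤ φ ε τ := fun τ _ => (hφ01 ε hε0 hεδ τ).1
    have hw := hweak (φ ε) ω' hω'int hFTC hφT hφnn
    have hE1 : ∫ τ in Ioo (0:ℝ) T, E τ * ω' τ =
        (2*ε)⁻¹ * ((∫ x in Ioc (s-ε) (s+ε), E x) - ∫ x in Ioc (t-ε) (t+ε), E x) := by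
      have heq : ∀ τ, E τ * ω' τ =
          (2*ε)⁻¹ * (E τ * (Ioc (s-ε) (s+ε)).indicator (fun _ => (1:ℝ)) τ -
            E τ * (Ioc (t-ε) (t+ε)).indicator (fun _ => (1:ℝ)) τ) := by
        intro τ; simp only [hω']; ring
      simp only [heq]
      rw [integral_const_mul, integral_sub (aux_integrableOn_mul_indicator E hEint hsub1)
        (aux_integrableOn_mul_indicator E hEint hsub2),
        aux_integral_mul_indicator E hEint hsub1, aux_integral_mul_indicator E hEint hsub2]
    have hφ0 : φ ε 0 = 0 := by
      simp only [hφ]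
      rw [min_eq_left (by linarith : (0:ℝ) ≤ s+ε), min_eq_left (by linarith : (0:ℝ) ≤ s-ε),
        min_eq_left (by linarith : (0:ℝ) ≤ t+ε), min_eq_left (by linarith : (0:ℝ) ≤ t-ε)]
      ring
    rw [hE1, hφ0, mul_zero, zero_add] at hw
    have hdistrib : (2*ε)⁻¹ * ((∫ x in Ioc (s-ε) (s+ε), E x) - ∫ x in Ioc (t-ε) (t+ε), E x)
        = (2*ε)⁻¹ * (∫ x in Ioc (s-ε) (s+ε), E x) -
          (2*ε)⁻¹ * ∫ x in Ioc (t-ε) (t+ε), E x := by ring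
    rw [hdistrib] at hw
    linarith [hw]
  -- dominated convergence for the D-term
  have hI : Tendsto (fun ε => ∫ τ in Ioo (0:ℝ) T, D τ * φ ε τ) (𝓝[>] (0:ℝ))
      (𝓝 (∫ τ in s..t, D τ)) := by
    apply aux_domconv D hDint s t hs.le hst htT φ
    · apply Filter.Eventually.of_forall
      intro ε
      apply (hDint.aestronglyMeasurable.mul ?_)
      apply Continuous.aestronglyMeasurable
      simp only [hφ]
      fun_prop
    · filter_upwards [Ioo_mem_nhdsGT_of_mem ⟨le_rfl, hδpos⟩] with ε hε τ _
      obtain ⟨h1, h2⟩ := hφ01 ε hε.1 hε.2 τ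
      rw [abs_le]; constructor <;> linarith
    · intro τ hτ hτs hτt
      rcases lt_trichotomy τ s with h | h | h
      · refine Tendsto.congr' ?_ tendsto_const_nhds
        filter_upwards [Ioo_mem_nhdsGT_of_mem ⟨le_rfl, show (0:ℝ) < s - τ by linarith⟩]
          with ε ⟨hε0, hεd⟩
        rw [indicator_of_notMem (by simp only [mem_Ioc, not_and_or]; left; linarith)]
        simp only [hφ]
        rw [min_eq_left (by linarith : τ ≤ s+ε), min_eq_left (by linarith : τ ≤ s-ε),
          min_eq_left (by linarith : τ ≤ t+ε), min_eq_left (by linarith : τ ≤ t-ε)]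
        ring
      · exact absurd h hτs
      · rcases lt_trichotomy τ t with h' | h' | h'
        · refine Tendsto.congr' ?_ tendsto_const_nhds
          filter_upwards [Ioo_mem_nhdsGT_of_mem
            ⟨le_rfl, show (0:ℝ) < min (τ - s) (t - τ) by apply lt_min <;> linarith⟩]
            with ε ⟨hε0, hεd⟩
          have hd1 : ε < τ - s := lt_of_lt_of_le hεd (min_le_left _ _)
          have hd2 : ε < t - τ := lt_of_lt_of_le hεd (min_le_right _ _)
          rw [indicator_of_mem (show τ ∈ Ioc s t from ⟨h, h'.le⟩)]
          simp only [hφ]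
          rw [min_eq_right (by linarith : s+ε ≤ τ), min_eq_right (by linarith : s-ε ≤ τ),
            min_eq_left (by linarith : τ ≤ t+ε), min_eq_left (by linarith : τ ≤ t-ε)]
          field_simp
          ring
        · exact absurd h' hτt
        · refine Tendsto.congr' ?_ tendsto_const_nhds
          filter_upwards [Ioo_mem_nhdsGT_of_mem ⟨le_rfl, show (0:ℝ) < τ - t by linarith⟩]
            with ε ⟨hε0, hεd⟩
          rw [indicator_of_notMem (by simp only [mem_Ioc, not_and_or]; right; linarith)]
          simp only [hφ]
          rw [min_eq_right (by linarith : s+ε ≤ τ), min_eq_right (by linarith : s-ε ≤ τ),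
            min_eq_right (by linarith : t+ε ≤ τ), min_eq_right (by linarith : t-ε ≤ τ)]
          ring
  exact aux_key E D hElsc hEint hs.le hst htT _ _ hA hI hineq


lemma aux_case_zero {T : ℝ} (hT : 0 < T) (E D : ℝ → ℝ)
    (hElsc : LowerSemicontinuousOn E (Ico 0 T))
    (hEint : IntegrableOn E (Ioo 0 T))
    (hDint : IntegrableOn D (Ioo 0 T))
    (hweak : ∀ ω ω' : ℝ → ℝ, IntegrableOn ω' (Ioo 0 T) →
      (∀ t ∈ Icc (0 : ℝ) T, ω t = ω 0 + ∫ τ in (0 : ℝ)..t, ω' τ) →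
      ω T = 0 → (∀ t ∈ Icc (0 : ℝ) T, 0 ≤ ω t) →
      E 0 * ω 0 + ∫ τ in Ioo (0 : ℝ) T, E τ * ω' τ ≥ ∫ τ in Ioo (0 : ℝ) T, D τ * ω τ)
    {t : ℝ} (ht : 0 < t) (htT : t < T) :
    E t + ∫ τ in (0:ℝ)..t, D τ ≤ E 0 := by
  set φ : ℝ → ℝ → ℝ := fun ε τ =>
    1 - (2*ε)⁻¹ * (min τ (t+ε) - min τ (t-ε)) with hφ
  have hδpos : (0:ℝ) < min t (T-t) := lt_min ht (by linarith)
  have hδt : min t (T-t) ≤ t := min_le_left _ _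
  have hδT : min t (T-t) ≤ T-t := min_le_right _ _
  set δ := min t (T-t)
  have hφ01 : ∀ ε, 0 < ε → ε < δ → ∀ τ : ℝ, 0 ≤ φ ε τ ∧ φ ε τ ≤ 1 := by
    intro ε hε0 hεδ τ
    have hεt : ε < t := lt_of_lt_of_le hεδ hδt
    have h2ε : (0:ℝ) < 2*ε := by linarith
    have hℓt0 : 0 ≤ min τ (t+ε) - min τ (t-ε) := aux_ell_nonneg (by linarith)
    have hℓtle : min τ (t+ε) - min τ (t-ε) ≤ 2*ε := by
      have := aux_ell_le (a := t-ε) (b := t+ε) (τ := τ) (by linarith); linarith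
    constructor
    · have h1 : (2*ε)⁻¹ * (min τ (t+ε) - min τ (t-ε)) ≤ (2*ε)⁻¹ * (2*ε) :=
        mul_le_mul_of_nonneg_left hℓtle (by positivity)
      rw [inv_mul_cancel₀ (ne_of_gt h2ε)] at h1
      simp only [hφ]; linarith
    · have h1 : 0 ≤ (2*ε)⁻¹ * (min τ (t+ε) - min τ (t-ε)) :=
        mul_nonneg (by positivity) hℓt0
      simp only [hφ]; linarith
  have hineq : ∀ᶠ ε in 𝓝[>] (0:ℝ),
      (2*ε)⁻¹ * ∫ x in Ioc (t-ε) (t+ε), E x ≤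
        E 0 - ∫ τ in Ioo (0:ℝ) T, D τ * φ ε τ := by
    filter_upwards [Ioo_mem_nhdsGT_of_mem ⟨le_rfl, hδpos⟩] with ε hε
    obtain ⟨hε0, hεδ⟩ := hε
    have hεt : ε < t := lt_of_lt_of_le hεδ hδt
    have hεT : t + ε < T := by have := lt_of_lt_of_le hεδ hδT; linarith
    have h2ε : (0:ℝ) < 2*ε := by linarith
    have hsub2 : Ioc (t-ε) (t+ε) ⊆ Ioo 0 T := by
      intro τ hτ; obtain ⟨h1, h2⟩ := hτ
      constructor <;> linarith
    set ω' : ℝ → ℝ := fun τ => -(2*ε)⁻¹ *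
      (Ioc (t-ε) (t+ε)).indicator (fun _ => (1:ℝ)) τ with hω'
    have hω'int : IntegrableOn ω' (Ioo 0 T) :=
      ((aux_ind_int (t-ε) (t+ε)).const_mul _).integrableOn
    have hφ0 : φ ε 0 = 1 := by
      simp only [hφ]
      rw [min_eq_left (by linarith : (0:ℝ) ≤ t+ε), min_eq_left (by linarith : (0:ℝ) ≤ t-ε)]
      ring
    have hFTC : ∀ τ ∈ Icc (0:ℝ) T, φ ε τ = φ ε 0 + ∫ x in (0:ℝ)..τ, ω' x := by
      intro τ hτ
      rw [hφ0, hω']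
      have : ∫ x in (0:ℝ)..τ, -(2*ε)⁻¹ * (Ioc (t-ε) (t+ε)).indicator (fun _ => (1:ℝ)) x
          = -(2*ε)⁻¹ * (min τ (t+ε) - min τ (t-ε)) := by
        rw [intervalIntegral.integral_const_mul,
          aux_integral_indicator (by linarith) (by linarith) τ hτ.1]
      rw [this]; simp only [hφ]; ring
    have hφT : φ ε T = 0 := by
      simp only [hφ]
      rw [min_eq_right (by linarith : t+ε ≤ T), min_eq_right (by linarith : t-ε ≤ T)]
      field_simp
      ring
    have hφnn : ∀ τ ∈ Icc (0:ℝ) T, 0 ≤ φ ε τ := fun τ _ => (hφ01 ε hε0 hεδ τ).1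
    have hw := hweak (φ ε) ω' hω'int hFTC hφT hφnn
    have hE1 : ∫ τ in Ioo (0:ℝ) T, E τ * ω' τ =
        -((2*ε)⁻¹ * ∫ x in Ioc (t-ε) (t+ε), E x) := by
      have heq : ∀ τ, E τ * ω' τ =
          -(2*ε)⁻¹ * (E τ * (Ioc (t-ε) (t+ε)).indicator (fun _ => (1:ℝ)) τ) := by
        intro τ; simp only [hω']; ring
      simp only [heq]
      rw [integral_const_mul, aux_integral_mul_indicator E hEint hsub2]
      ring
    rw [hE1, hφ0, mul_one] at hw
    linarith [hw]
  have hI : Tendsto (fun ε => ∫ τ in Ioo (0:ℝ) T, D τ * φ ε τ) (𝓝[>] (0:ℝ))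
      (𝓝 (∫ τ in (0:ℝ)..t, D τ)) := by
    apply aux_domconv D hDint 0 t le_rfl ht htT φ
    · apply Filter.Eventually.of_forall
      intro ε
      apply (hDint.aestronglyMeasurable.mul ?_)
      apply Continuous.aestronglyMeasurable
      simp only [hφ]
      fun_prop
    · filter_upwards [Ioo_mem_nhdsGT_of_mem ⟨le_rfl, hδpos⟩] with ε hε τ _
      obtain ⟨h1, h2⟩ := hφ01 ε hε.1 hε.2 τ
      rw [abs_le]; constructor <;> linarith
    · intro τ hτ hτ0 hτt
      rcases lt_trichotomy τ t with h' | h' | h'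
      · refine Tendsto.congr' ?_ tendsto_const_nhds
        filter_upwards [Ioo_mem_nhdsGT_of_mem ⟨le_rfl, show (0:ℝ) < t - τ by linarith⟩]
          with ε hε
        obtain ⟨hε0, hεd⟩ := hε
        rw [indicator_of_mem (show τ ∈ Ioc (0:ℝ) t from ⟨hτ.1, h'.le⟩)]
        simp only [hφ]
        rw [min_eq_left (by linarith : τ ≤ t+ε), min_eq_left (by linarith : τ ≤ t-ε)]
        ring
      · exact absurd h' hτt
      · refine Tendsto.congr' ?_ tendsto_const_nhds
        filter_upwards [Ioo_mem_nhdsGT_of_mem ⟨le_rfl, show (0:ℝ) < τ - t by linarith⟩]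
          with ε hε
        obtain ⟨hε0, hεd⟩ := hε
        rw [indicator_of_notMem (by simp only [mem_Ioc, not_and_or]; right; linarith)]
        simp only [hφ]
        rw [min_eq_right (by linarith : t+ε ≤ τ), min_eq_right (by linarith : t-ε ≤ τ)]
        field_simp
        ring
  exact aux_key E D hElsc hEint le_rfl ht htT _ _ tendsto_const_nhds hI hineq


/-- Lemma (Abels): if a lower semicontinuous energy `E` and an integrable dissipation `D`
satisfy the weak (in time) energy inequality tested against all nonnegative absolutely
continuous weights `ω` vanishing at `T`, then the pointwise energy inequality
`E t + ∫_s^t D ≤ E s` holds for a.e. `s ∈ [0,T)` (including `s = 0`) and all `t ∈ [s,T)`. -/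
theorem stmt_2 (T : ℝ) (hT : 0 < T) (E D : ℝ → ℝ)
    (hElsc : LowerSemicontinuousOn E (Ico 0 T))
    (hEint : IntegrableOn E (Ioo 0 T))
    (hDint : IntegrableOn D (Ioo 0 T))
    (hweak : ∀ ω ω' : ℝ → ℝ, IntegrableOn ω' (Ioo 0 T) →
      (∀ t ∈ Icc (0 : ℝ) T, ω t = ω 0 + ∫ τ in (0 : ℝ)..t, ω' τ) →
      ω T = 0 → (∀ t ∈ Icc (0 : ℝ) T, 0 ≤ ω t) →
      E 0 * ω 0 + ∫ τ in Ioo (0 : ℝ) T, E τ * ω' τ ≥ ∫ τ in Ioo (0 : ℝ) T, D τ * ω τ) :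
    ∃ S : Set ℝ, S ⊆ Ico 0 T ∧ (0 : ℝ) ∈ S ∧ volume (Ico 0 T \ S) = 0 ∧
      ∀ s ∈ S, ∀ t : ℝ, s ≤ t → t < T → E t + ∫ τ in s..t, D τ ≤ E s := by
  set P : ℝ → Prop := fun x => Tendsto (fun ε : ℝ => (2*ε)⁻¹ * ∫ y in Ioc (x-ε) (x+ε), E y)
    (𝓝[>] (0:ℝ)) (𝓝 (E x)) with hP
  have hEt : Integrable ((Ioo (0:ℝ) T).indicator E) volume :=
    hEint.integrable_indicator measurableSet_Ioo
  have hleb0 := aux_lebesgue _ hEt.locallyIntegrable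
  have hleb : ∀ᵐ x, x ∈ Ioo (0:ℝ) T → P x := by
    filter_upwards [hleb0] with x hx hxmem
    have h1 : (Ioo (0:ℝ) T).indicator E x = E x := indicator_of_mem hxmem E
    rw [h1] at hx
    apply hx.congr'
    have hpos : (0:ℝ) < min x (T - x) := lt_min hxmem.1 (by linarith [hxmem.2])
    filter_upwards [Ioo_mem_nhdsGT_of_mem ⟨le_rfl, hpos⟩] with ε hε
    obtain ⟨hε0, hεx⟩ := hε
    have hεx1 : ε < x := lt_of_lt_of_le hεx (min_le_left _ _)
    have hεx2 : ε < T - x := lt_of_lt_of_le hεx (min_le_right _ _)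
    have h2 : Ioc (x-ε) (x+ε) ⊆ Ioo 0 T := by
      intro τ hτ; obtain ⟨ha, hb⟩ := hτ; constructor <;> linarith
    congr 1
    exact setIntegral_congr_fun measurableSet_Ioc (fun τ hτ => indicator_of_mem (h2 hτ) E)
  refine ⟨insert 0 {x | x ∈ Ioo 0 T ∧ P x}, ?_, mem_insert _ _, ?_, ?_⟩
  · intro x hx
    rcases hx with rfl | hx
    · exact ⟨le_rfl, hT⟩
    · exact ⟨hx.1.1.le, hx.1.2⟩
  · apply measure_mono_null (t := {x | ¬ (x ∈ Ioo (0:ℝ) T → P x)}) ?_ (ae_iff.1 hleb)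
    intro x hx
    obtain ⟨⟨hx0, hxT⟩, hxS⟩ := hx
    have hxne : x ≠ 0 := fun h => hxS (h ▸ mem_insert _ _)
    have hxI : x ∈ Ioo (0:ℝ) T := ⟨lt_of_le_of_ne hx0 (Ne.symm hxne), hxT⟩
    simp only [mem_setOf_eq]
    intro h
    exact hxS (mem_insert_iff.2 (Or.inr ⟨hxI, h hxI⟩))
  · intro s hsS t hst htT
    rcases eq_or_lt_of_le hst with rfl | hst'
    · simp
    · rcases hsS with rfl | ⟨hmem, hPs⟩
      · exact aux_case_zero hT E D hElsc hEint hDint hweak hst' htT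
      · exact aux_case_pos hT E D hElsc hEint hDint hweak hmem.1 hst' htT hPs
end

section
/- Let F : ℝ → ℝ be a differentiable function that is bounded from below, and suppose there exist constants ĉ₃ > 0, ĉ₄ ≥ 0 and r ∈ (1,2] such that |F'(s)|^r ≤ ĉ₃|F(s)| + ĉ₄ for all s ∈ ℝ. Then F has polynomial growth of order r' = r/(r−1): there exist constants ĉ₅ > 0 and ĉ₆ ≥ 0 such that |F(s)| ≤ ĉ₅|s|^{r'} + ĉ₆ for all s ∈ ℝ. -/
/-!
Shifting `F` by a constant gives `u = F + 2|m| + 1 ≥ |F| + 1`, which satisfies the cleaner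
inequality `|u'|^r ≤ C u`. Then `u^(1 - 1/r)` has derivative `(1 - 1/r) u^(-1/r) u'`, bounded
by `(1 - 1/r) C^(1/r)`, so `u^(1/r')` grows at most linearly and `u` at most like `|s|^r'`.
-/

open Real

lemma Real.rpow_add_le_mul_rpow_add_rpow {a b p : ℝ} (ha : 0 ≤ a) (hb : 0 ≤ b) (hp : 1 ≤ p) :
    (a + b) ^ p ≤ 2 ^ (p - 1) * (a ^ p + b ^ p) := by
  lift a to NNReal using ha
  lift b to NNReal using hb
  exact_mod_cast NNReal.rpow_add_le_mul_rpow_add_rpow a b hp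

lemma abs_mul_rpow_neg_inv_le {a b C r : ℝ} (hb : 0 < b) (hr : 0 < r) (h : |a| ^ r ≤ C * b) :
    |a| * b ^ (-r⁻¹) ≤ C ^ r⁻¹ := by
  have hC : 0 ≤ C := nonneg_of_mul_nonneg_left ((rpow_nonneg (abs_nonneg a) r).trans h) hb
  have ha : |a| ≤ C ^ r⁻¹ * b ^ r⁻¹ := by
    rw [← mul_rpow hC hb.le, le_rpow_inv_iff_of_pos (abs_nonneg a) (by positivity) hr]
    exact h
  calc |a| * b ^ (-r⁻¹) ≤ C ^ r⁻¹ * b ^ r⁻¹ * b ^ (-r⁻¹) := by gcongr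
    _ = C ^ r⁻¹ := by rw [mul_assoc, ← rpow_add hb, add_neg_cancel, rpow_zero, mul_one]

theorem abs_rpow_one_sub_inv_sub_le {u : ℝ → ℝ} {C r : ℝ} (hu : Differentiable ℝ u)
    (hpos : ∀ s, 0 < u s) (hr : 1 ≤ r) (hbound : ∀ s, |deriv u s| ^ r ≤ C * u s) (x y : ℝ) :
    |u y ^ (1 - r⁻¹) - u x ^ (1 - r⁻¹)| ≤ (1 - r⁻¹) * C ^ r⁻¹ * |y - x| := by
  have hp : 0 ≤ 1 - r⁻¹ := sub_nonneg.mpr (inv_le_one_of_one_le₀ hr)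
  have hderiv : ∀ s, HasDerivAt (fun s ↦ u s ^ (1 - r⁻¹))
      (deriv u s * (1 - r⁻¹) * u s ^ (-r⁻¹)) s := fun s ↦ by
    simpa only [sub_sub_cancel_left] using
      (hu s).hasDerivAt.rpow_const (p := 1 - r⁻¹) (Or.inl (hpos s).ne')
  refine Convex.norm_image_sub_le_of_norm_deriv_le (fun s _ ↦ (hderiv s).differentiableAt)
    (fun s _ ↦ ?_) convex_univ (Set.mem_univ x) (Set.mem_univ y)
  rw [(hderiv s).deriv, Real.norm_eq_abs, abs_mul, abs_mul, abs_of_nonneg hp,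
    abs_of_pos (rpow_pos_of_pos (hpos s) _), mul_right_comm, mul_comm (1 - r⁻¹)]
  exact mul_le_mul_of_nonneg_right
    (abs_mul_rpow_neg_inv_le (hpos s) (by linarith) (hbound s)) hp

theorem exists_le_mul_abs_rpow_add_of_abs_deriv_rpow_le {u : ℝ → ℝ} {C r : ℝ}
    (hu : Differentiable ℝ u) (hpos : ∀ s, 0 < u s) (hC : 0 < C) (hr : 1 < r)
    (hbound : ∀ s, |deriv u s| ^ r ≤ C * u s) :
    ∃ c₅ > (0 : ℝ), ∃ c₆ ≥ (0 : ℝ), ∀ s : ℝ, u s ≤ c₅ * |s| ^ (r / (r - 1)) + c₆ := by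
  set p := 1 - r⁻¹
  set q := r / (r - 1)
  have hp : 0 < p := sub_pos.mpr (inv_lt_one_of_one_lt₀ hr)
  have hpq : p * q = 1 := by
    simp only [p, q]
    field_simp [(by linarith : r - 1 ≠ 0)]
  have hq : 1 ≤ q := (one_le_div (by linarith)).mpr (by linarith)
  set L := p * C ^ r⁻¹
  have hL : 0 < L := mul_pos hp (rpow_pos_of_pos hC _)
  have hu0 : 0 ≤ u 0 := (hpos 0).le
  refine ⟨2 ^ (q - 1) * L ^ q, by positivity, 2 ^ (q - 1) * u 0, by positivity, fun s ↦ ?_⟩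
  have hlin : u s ^ p ≤ u 0 ^ p + L * |s| := by
    have := abs_rpow_one_sub_inv_sub_le hu hpos hr.le hbound 0 s
    rw [sub_zero] at this
    linarith [le_abs_self (u s ^ p - u 0 ^ p)]
  have hinv : ∀ x : ℝ, 0 ≤ x → (x ^ p) ^ q = x := fun x hx ↦ by rw [← rpow_mul hx, hpq, rpow_one]
  calc u s = (u s ^ p) ^ q := (hinv _ (hpos s).le).symm
    _ ≤ (u 0 ^ p + L * |s|) ^ q := by have := (hpos s).le; gcongr
    _ ≤ 2 ^ (q - 1) * ((u 0 ^ p) ^ q + (L * |s|) ^ q) :=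
        rpow_add_le_mul_rpow_add_rpow (by positivity) (by positivity) hq
    _ = 2 ^ (q - 1) * L ^ q * |s| ^ q + 2 ^ (q - 1) * u 0 := by
        rw [hinv _ hu0, mul_rpow hL.le (abs_nonneg s)]
        ring

theorem stmt_3_general (F : ℝ → ℝ) (hF : Differentiable ℝ F)
    (m : ℝ) (hm : ∀ s, m ≤ F s)
    (c₃ c₄ r : ℝ) (hc₃ : 0 < c₃) (hr1 : 1 < r)
    (hgrow : ∀ s : ℝ, |deriv F s| ^ r ≤ c₃ * |F s| + c₄) :
    ∃ c₅ > (0 : ℝ), ∃ c₆ ≥ (0 : ℝ), ∀ s : ℝ, |F s| ≤ c₅ * |s| ^ (r / (r - 1)) + c₆ := by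
  set u : ℝ → ℝ := fun s ↦ F s + (2 * |m| + 1)
  have hFu : ∀ s, |F s| + 1 ≤ u s := fun s ↦ by
    have := hm s
    simp only [u]
    cases abs_cases (F s) <;> cases abs_cases m <;> linarith
  have hbound : ∀ s, |deriv u s| ^ r ≤ (c₃ + |c₄|) * u s := fun s ↦ by
    have hFs := hFu s
    rw [deriv_add_const]
    nlinarith [hgrow s, le_abs_self c₄, abs_nonneg c₄, abs_nonneg (F s)]
  obtain ⟨c₅, hc₅, c₆, hc₆, hu⟩ := exists_le_mul_abs_rpow_add_of_abs_deriv_rpow_le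
    (hF.add_const _) (fun s ↦ by linarith [hFu s, abs_nonneg (F s)])
    (by positivity) hr1 hbound
  exact ⟨c₅, hc₅, c₆, hc₆, fun s ↦ by linarith [hFu s, hu s]⟩

/-- If `F : ℝ → ℝ` is differentiable, bounded from below, and `|F'(s)|^r ≤ ĉ₃|F(s)| + ĉ₄`
for some `r ∈ (1,2]`, then `F` has polynomial growth of order `r' = r/(r-1)`. -/
theorem stmt_3 (F : ℝ → ℝ) (hF : Differentiable ℝ F)
    (m : ℝ) (hm : ∀ s, m ≤ F s)
    (c₃ c₄ r : ℝ) (hc₃ : 0 < c₃) (hc₄ : 0 ≤ c₄) (hr1 : 1 < r) (hr2 : r ≤ 2)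
    (hgrow : ∀ s : ℝ, |deriv F s| ^ r ≤ c₃ * |F s| + c₄) :
    ∃ c₅ > (0 : ℝ), ∃ c₆ ≥ (0 : ℝ), ∀ s : ℝ, |F s| ≤ c₅ * |s| ^ (r / (r - 1)) + c₆ :=
  stmt_3_general F hF m hm c₃ c₄ r hc₃ hr1 hgrow
end

section
/- Let (Ω, μ) be a finite measure space with μ(Ω) > 0, let g : (−1,1) → ℝ be nondecreasing, and let s₀, m₁, m₂ ∈ (−1,1) satisfy m₁ ≤ s₀ ≤ m₂ and g(s₀) = 0. Let φ : Ω → ℝ be measurable with φ(x) ∈ (−1,1) for a.e. x, such that φ and g∘φ are integrable, and set c := (1/μ(Ω)) ∫_Ω φ dμ. Assume m₁ < c < m₂ and define η := min{c − m₁, m₂ − c}, κ := max{c − m₁, m₂ − c}, M := sup_{s ∈ [m₁,m₂]} |g(s)|, and ḡ := (1/μ(Ω)) ∫_Ω g(φ) dμ. Then η ∫_Ω |g(φ(x))| dμ(x) ≤ ∫_Ω (φ(x) − c)·(g(φ(x)) − ḡ) dμ(x) + (η + κ)·μ(Ω)·M. -/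
/-!
Split `Ω` according to whether `φ` lies below `m₁`, in `[m₁, m₂]`, or above `m₂`. Outside
`[m₁, m₂]` monotonicity and `g(s₀) = 0` give `g(φ)` the sign of `φ - c`, and `|φ - c| ≥ η`
there, so `η |g(φ)| ≤ (φ - c) g(φ)`; inside, both `η |g(φ)|` and `-(φ - c) g(φ)` are bounded
by constants (`η M` and `κ M`). Integrating this pointwise bound and using that `φ - c` has
mean zero, so that subtracting `ḡ` does not change the pairing, gives the estimate.
-/

open MeasureTheory Set

theorem MonotoneOn.abs_le_sSup_abs_image_Icc {g : ℝ → ℝ} {a b t : ℝ}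
    (hg : MonotoneOn g (Icc a b)) (ht : t ∈ Icc a b) :
    |g t| ≤ sSup ((fun s => |g s|) '' Icc a b) := by
  have hab : a ≤ b := ht.1.trans ht.2
  refine le_csSup ⟨max |g a| |g b|, ?_⟩ (mem_image_of_mem _ ht)
  rintro _ ⟨s, hs, rfl⟩
  exact abs_le_max_abs_abs (hg (left_mem_Icc.2 hab) hs hs.1) (hg hs (right_mem_Icc.2 hab) hs.2)

theorem MonotoneOn.min_mul_abs_le_sub_mul_add {I : Set ℝ} {g : ℝ → ℝ} (hg : MonotoneOn g I)
    {m₁ m₂ s₀ c M s : ℝ} (hI : Icc m₁ m₂ ⊆ I) (hs₀ : s₀ ∈ Icc m₁ m₂) (hgs₀ : g s₀ = 0)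
    (hc : c ∈ Icc m₁ m₂) (hM : ∀ t ∈ Icc m₁ m₂, |g t| ≤ M) (hs : s ∈ I) :
    min (c - m₁) (m₂ - c) * |g s|
      ≤ (s - c) * g s + (min (c - m₁) (m₂ - c) + max (c - m₁) (m₂ - c)) * M := by
  set η := min (c - m₁) (m₂ - c)
  set κ := max (c - m₁) (m₂ - c)
  have hη₁ : η ≤ c - m₁ := min_le_left _ _
  have hη₂ : η ≤ m₂ - c := min_le_right _ _
  have hκ₁ : c - m₁ ≤ κ := le_max_left _ _
  have hκ₂ : m₂ - c ≤ κ := le_max_right _ _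
  have hη : 0 ≤ η := le_min (by linarith [hc.1]) (by linarith [hc.2])
  have hM₀ : 0 ≤ M := (abs_nonneg _).trans (hM s₀ hs₀)
  have hm₁ : m₁ ∈ I := hI (left_mem_Icc.2 (hc.1.trans hc.2))
  have hm₂ : m₂ ∈ I := hI (right_mem_Icc.2 (hc.1.trans hc.2))
  rcases le_or_gt m₂ s with hs₂ | hs₂
  · have hgs : 0 ≤ g s := hgs₀ ▸ (hg (hI hs₀) hm₂ hs₀.2).trans (hg hm₂ hs hs₂)
    rw [abs_of_nonneg hgs]
    nlinarith
  rcases le_or_gt s m₁ with hs₁ | hs₁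
  · have hgs : g s ≤ 0 := hgs₀ ▸ (hg hs hm₁ hs₁).trans (hg hm₁ (hI hs₀) hs₀.1)
    rw [abs_of_nonpos hgs]
    nlinarith
  have hgM : |g s| ≤ M := hM s ⟨hs₁.le, hs₂.le⟩
  have hsc : |s - c| ≤ κ := abs_le.2 ⟨by linarith, by linarith⟩
  have hpair : |(s - c) * g s| ≤ κ * M := by
    rw [abs_mul]
    exact mul_le_mul hsc hgM (abs_nonneg _) ((abs_nonneg _).trans hsc)
  linarith [neg_abs_le ((s - c) * g s), mul_le_mul_of_nonneg_left hgM hη]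

theorem integral_mul_sub_const_of_integral_eq_zero {Ω : Type*} [MeasurableSpace Ω]
    {μ : Measure Ω} {u h : Ω → ℝ} (hu : Integrable u μ) (huh : Integrable (fun x => u x * h x) μ)
    (hu₀ : ∫ x, u x ∂μ = 0) (b : ℝ) :
    ∫ x, u x * (h x - b) ∂μ = ∫ x, u x * h x ∂μ := by
  simp_rw [mul_sub]
  rw [integral_sub huh (hu.mul_const b), integral_mul_const, hu₀, zero_mul, sub_zero]

theorem stmt_11_general {Ω : Type*} [MeasurableSpace Ω] (μ : Measure Ω) [IsFiniteMeasure μ]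
    (g : ℝ → ℝ) (hg : MonotoneOn g (Ioo (-1 : ℝ) 1))
    (s₀ m₁ m₂ : ℝ) (hm₁ : m₁ ∈ Ioo (-1 : ℝ) 1)
    (hm₂ : m₂ ∈ Ioo (-1 : ℝ) 1) (hm₁s₀ : m₁ ≤ s₀) (hs₀m₂ : s₀ ≤ m₂) (hgs₀ : g s₀ = 0)
    (φ : Ω → ℝ) (hφrange : ∀ᵐ x ∂μ, φ x ∈ Ioo (-1 : ℝ) 1)
    (hφint : Integrable φ μ) (hgφint : Integrable (fun x => g (φ x)) μ)
    (c η κ M gbar : ℝ)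
    (hc : c = ((μ Set.univ).toReal)⁻¹ * ∫ x, φ x ∂μ)
    (hcm : m₁ < c ∧ c < m₂)
    (hη : η = min (c - m₁) (m₂ - c)) (hκ : κ = max (c - m₁) (m₂ - c))
    (hM : M = sSup ((fun s => |g s|) '' Icc m₁ m₂)) :
    η * ∫ x, |g (φ x)| ∂μ
      ≤ (∫ x, (φ x - c) * (g (φ x) - gbar) ∂μ) + (η + κ) * (μ Set.univ).toReal * M := by
  subst hη hκ hM
  have hI : Icc m₁ m₂ ⊆ Ioo (-1 : ℝ) 1 := Icc_subset_Ioo hm₁.1 hm₂.2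
  have hbound (t : ℝ) (ht : t ∈ Icc m₁ m₂) := (hg.mono hI).abs_le_sSup_abs_image_Icc ht
  have hcentered : Integrable (fun x => φ x - c) μ := hφint.sub (integrable_const c)
  have hmean : ∫ x, (φ x - c) ∂μ = 0 := by
    rw [hc, ← smul_eq_mul, ← measureReal_def, ← average_eq]
    exact integral_sub_average μ φ
  have hpair : Integrable (fun x => (φ x - c) * g (φ x)) μ :=
    hgφint.bdd_mul (c := 1 + |c|) hcentered.aestronglyMeasurable
      (hφrange.mono fun x hx => (abs_sub _ _).trans
        (by linarith [abs_lt.2 ⟨hx.1, hx.2⟩]))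
  rw [integral_mul_sub_const_of_integral_eq_zero hcentered hpair hmean,
    ← integral_const_mul]
  calc ∫ x, _ * |g (φ x)| ∂μ
      ≤ ∫ x, ((φ x - c) * g (φ x) + _) ∂μ :=
        integral_mono_ae (hgφint.abs.const_mul _) (hpair.add (integrable_const _))
          (hφrange.mono fun x hx => hg.min_mul_abs_le_sub_mul_add hI ⟨hm₁s₀, hs₀m₂⟩ hgs₀
            ⟨hcm.1.le, hcm.2.le⟩ hbound hx)
    _ = _ := by rw [integral_add hpair (integrable_const _), integral_const, smul_eq_mul,
        measureReal_def]; ring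

/-- Kenmochi–Niezgódka–Pawłow type estimate: for a nondecreasing `g` on `(-1,1)` vanishing
at `s₀`, and `φ` with values in `(-1,1)` whose mean `c` satisfies `m₁ < c < m₂`, one has
`η ∫ |g(φ)| ≤ ∫ (φ - c)(g(φ) - ḡ) + (η + κ) μ(Ω) M`. -/
theorem stmt_11 {Ω : Type*} [MeasurableSpace Ω] (μ : Measure Ω) [IsFiniteMeasure μ]
    (hμ : 0 < μ Set.univ)
    (g : ℝ → ℝ) (hg : MonotoneOn g (Ioo (-1 : ℝ) 1))
    (s₀ m₁ m₂ : ℝ) (hs₀ : s₀ ∈ Ioo (-1 : ℝ) 1) (hm₁ : m₁ ∈ Ioo (-1 : ℝ) 1)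
    (hm₂ : m₂ ∈ Ioo (-1 : ℝ) 1) (hm₁s₀ : m₁ ≤ s₀) (hs₀m₂ : s₀ ≤ m₂) (hgs₀ : g s₀ = 0)
    (φ : Ω → ℝ) (hφmeas : Measurable φ) (hφrange : ∀ᵐ x ∂μ, φ x ∈ Ioo (-1 : ℝ) 1)
    (hφint : Integrable φ μ) (hgφint : Integrable (fun x => g (φ x)) μ)
    (c η κ M gbar : ℝ)
    (hc : c = ((μ Set.univ).toReal)⁻¹ * ∫ x, φ x ∂μ)
    (hcm : m₁ < c ∧ c < m₂)
    (hη : η = min (c - m₁) (m₂ - c)) (hκ : κ = max (c - m₁) (m₂ - c))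
    (hM : M = sSup ((fun s => |g s|) '' Icc m₁ m₂))
    (hgbar : gbar = ((μ Set.univ).toReal)⁻¹ * ∫ x, g (φ x) ∂μ) :
    η * ∫ x, |g (φ x)| ∂μ
      ≤ (∫ x, (φ x - c) * (g (φ x) - gbar) ∂μ) + (η + κ) * (μ Set.univ).toReal * M :=
  stmt_11_general μ g hg s₀ m₁ m₂ hm₁ hm₂ hm₁s₀ hs₀m₂ hgs₀ φ hφrange hφint hgφint c η κ M gbar hc
    hcm hη hκ hM
end
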